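/- Let f : X → ℝ∪{+∞} with ∂f maximal monotone, and let g : X → ℝ∪{+∞} satisfy g = f on D(∂f) and g ≥ f everywhere. Then ∂g = ∂f, and in particular ∂g is maximal monotone. -/

import Mathlib

open scoped Topology

section Defs

variable {X : Type*} [AddCommGroup X] [Module ℝ X] [TopologicalSpace X]

/-- `p ∈ ∂f(x)`: `f x` is finite and `f y ≥ f x + ⟨y - x, p⟩` for all `y`. -/
def IsSubgrad (f : X → EReal) (x : X) (p : X →L[ℝ] ℝ) : Prop :=
  f x ≠ ⊤ ∧ f x ≠ ⊥ ∧ ∀ y, f x + (p (y - x) : EReal) ≤ f y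

/-- Graph of the convex subdifferential of `f`. -/
def graphSub (f : X → EReal) : Set (X × (X →L[ℝ] ℝ)) :=
  {q | IsSubgrad f q.1 q.2}

/-- Domain `D(∂f)` of the subdifferential. -/
def subdiffDom (f : X → EReal) : Set X := {x | ∃ p, IsSubgrad f x p}

/-- Range `R(∂f)` of the subdifferential. -/
def subdiffRan (f : X → EReal) : Set (X →L[ℝ] ℝ) := {p | ∃ x, IsSubgrad f x p}

/-- Monotone subset of `X × X*`. -/
def MonotoneSet (S : Set (X × (X →L[ℝ] ℝ))) : Prop :=
  ∀ a ∈ S, ∀ b ∈ S, 0 ≤ a.2 (a.1 - b.1) - b.2 (a.1 - b.1)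

/-- Maximal monotone subset of `X × X*` (maximal w.r.t. graph inclusion). -/
def MaxMonotoneSet (S : Set (X × (X →L[ℝ] ℝ))) : Prop :=
  MonotoneSet S ∧ ∀ T, MonotoneSet T → S ⊆ T → T = S

/-- Proper function: never `−∞` and not identically `+∞`. -/
def ProperE {Y : Type*} (f : Y → EReal) : Prop :=
  (∃ x, f x ≠ ⊤) ∧ ∀ x, f x ≠ ⊥

/-- Convexity of an extended-real-valued function via its epigraph. -/
def ConvexEpi (f : X → EReal) : Prop :=
  Convex ℝ {q : X × ℝ | f q.1 ≤ (q.2 : EReal)}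

/-- The lsc convex hull: the greatest lsc convex function majorized by `f`. -/
noncomputable def lscConvHull (f : X → EReal) : X → EReal := fun x =>
  sSup {v | ∃ g : X → EReal, ConvexEpi g ∧ LowerSemicontinuous g ∧ g ≤ f ∧ v = g x}

/-- Convex conjugate w.r.t. the dual system `(X, X*)`. -/
noncomputable def conjE (f : X → EReal) (p : X →L[ℝ] ℝ) : EReal :=
  ⨆ x, ((p x : EReal) - f x)

/-- Biconjugate `f**`. -/
noncomputable def biconjE (f : X → EReal) (x : X) : EReal :=
  ⨆ p : X →L[ℝ] ℝ, ((p x : EReal) - conjE f p)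

/-- Fitzpatrick function of `∂f`. -/
noncomputable def fitzSub (f : X → EReal) (x : X) (p : X →L[ℝ] ℝ) : EReal :=
  ⨆ a, ⨆ s, ⨆ _ : IsSubgrad f a s, ((s (x - a) + p a : ℝ) : EReal)

/-- Upper envelope `f^∪(x) = sup{⟨x−a, a*⟩ + f(a) : (a,a*) ∈ Graph ∂f}`. -/
noncomputable def upperEnv (f : X → EReal) (x : X) : EReal :=
  ⨆ a, ⨆ s, ⨆ _ : IsSubgrad f a s, ((s (x - a) : EReal) + f a)

end Defs

/-! Since `g ≥ f` with equality on `D(∂f)`, every subgradient of `f` is a subgradient of `g`, so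
`Graph ∂f ⊆ Graph ∂g`. A subdifferential graph is always monotone, hence maximality of `Graph ∂f`
forces equality. -/

section Subdifferential

variable {X : Type*} [AddCommGroup X] [Module ℝ X] [TopologicalSpace X]

theorem graphSub_monotone (f : X → EReal) : MonotoneSet (graphSub f) := by
  rintro ⟨a, p⟩ ⟨ha_top, ha_bot, hp⟩ ⟨b, q⟩ ⟨hb_top, hb_bot, hq⟩
  obtain ⟨A, hA⟩ : ∃ A : ℝ, f a = A := ⟨(f a).toReal, (EReal.coe_toReal ha_top ha_bot).symm⟩
  obtain ⟨B, hB⟩ : ∃ B : ℝ, f b = B := ⟨(f b).toReal, (EReal.coe_toReal hb_top hb_bot).symm⟩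
  have hpb := hp b
  have hqa := hq a
  rw [hA, hB] at hpb hqa
  norm_cast at hpb hqa
  have hp_neg : p (b - a) = -p (a - b) := by rw [← map_neg, neg_sub]
  show 0 ≤ p (a - b) - q (a - b)
  linarith

theorem graphSub_subset_of_le_of_eqOn_subdiffDom {f g : X → EReal} (hge : ∀ x, f x ≤ g x)
    (heq : ∀ x ∈ subdiffDom f, g x = f x) : graphSub f ⊆ graphSub g := by
  rintro ⟨x, p⟩ ⟨hx_top, hx_bot, hp⟩
  have hgx : g x = f x := heq x ⟨p, hx_top, hx_bot, hp⟩
  exact ⟨hgx ▸ hx_top, hgx ▸ hx_bot, fun y => hgx ▸ (hp y).trans (hge y)⟩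

end Subdifferential

theorem increase_off_domain_keeps_subdiff_general {X : Type*} [AddCommGroup X] [Module ℝ X] [TopologicalSpace X]
    (f g : X → EReal)
    (hmax : MaxMonotoneSet (graphSub f))
    (heq : ∀ x ∈ subdiffDom f, g x = f x)
    (hge : ∀ x, f x ≤ g x) :
    graphSub g = graphSub f ∧ MaxMonotoneSet (graphSub g) := by
  have hgf : graphSub g = graphSub f :=
    hmax.2 _ (graphSub_monotone g) (graphSub_subset_of_le_of_eqOn_subdiffDom hge heq)
  exact ⟨hgf, hgf ▸ hmax⟩

theorem increase_off_domain_keeps_subdiff {X : Type*} [AddCommGroup X] [Module ℝ X] [TopologicalSpace X]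
    [IsTopologicalAddGroup X] [ContinuousSMul ℝ X] [LocallyConvexSpace ℝ X] [T2Space X]
    (f g : X → EReal) (hbf : ∀ x, f x ≠ ⊥) (hbg : ∀ x, g x ≠ ⊥)
    (hmax : MaxMonotoneSet (graphSub f))
    (heq : ∀ x ∈ subdiffDom f, g x = f x)
    (hge : ∀ x, f x ≤ g x) :
    graphSub g = graphSub f ∧ MaxMonotoneSet (graphSub g) :=
  increase_off_domain_keeps_subdiff_general f g hmax heq hge
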